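/- arXiv:0706.1617 — 3 statements merged into one kernel-verified Lean document; each statement's English description precedes it below -/
import Mathlib

section
/- For every finite strategic game H and every k ≥ 0, LW^k = GW^k: the k-th iterate (starting from the full game H) of the local elimination of strategies weakly dominated by a pure strategy equals the k-th iterate of the corresponding global elimination operator. -/
open Function

/-- The opponents' part of the joint strategy `t` lies in the restriction `G`. -/
def OppIn {ι : Type*} [DecidableEq ι] {σ : ι → Type*} (G : ∀ i, Set (σ i)) (i : ι) (t : ∀ j, σ j) : Prop :=
  ∀ j, j ≠ i → t j ∈ G j

/-- `s'` strictly dominates `s` on the restriction `G` (pure strategies). -/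
def SDom {ι : Type*} [DecidableEq ι] {σ : ι → Type*} (p : ι → (∀ j, σ j) → ℝ) (G : ∀ i, Set (σ i))
    (i : ι) (s' s : σ i) : Prop :=
  ∀ t : ∀ j, σ j, OppIn G i t → p i (update t i s) < p i (update t i s')

/-- `s'` weakly dominates `s` on the restriction `G` (pure strategies). -/
def WDom {ι : Type*} [DecidableEq ι] {σ : ι → Type*} (p : ι → (∀ j, σ j) → ℝ) (G : ∀ i, Set (σ i))
    (i : ι) (s' s : σ i) : Prop :=
  (∀ t : ∀ j, σ j, OppIn G i t → p i (update t i s) ≤ p i (update t i s')) ∧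
  (∃ t : ∀ j, σ j, OppIn G i t ∧ p i (update t i s) < p i (update t i s'))

/-- Probability distributions over a finite type with support contained in `A`. -/
def Mixed {α : Type*} [Fintype α] (A : Set α) : Set (α → ℝ) :=
  {m | (∀ a, 0 ≤ m a) ∧ ∑ a, m a = 1 ∧ ∀ a, m a ≠ 0 → a ∈ A}

/-- Expected payoff of player `i` using mixed strategy `m` against `t₋ᵢ`. -/
def epay {ι : Type*} [DecidableEq ι] {σ : ι → Type*} [∀ i, Fintype (σ i)]
    (p : ι → (∀ j, σ j) → ℝ) (i : ι) (m : σ i → ℝ) (t : ∀ j, σ j) : ℝ :=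
  ∑ a, m a * p i (update t i a)

/-- The mixed strategy `m` strictly dominates `s` on `G`. -/
def MSDom {ι : Type*} [DecidableEq ι] {σ : ι → Type*} [∀ i, Fintype (σ i)]
    (p : ι → (∀ j, σ j) → ℝ) (G : ∀ i, Set (σ i)) (i : ι) (m : σ i → ℝ) (s : σ i) : Prop :=
  ∀ t : ∀ j, σ j, OppIn G i t → p i (update t i s) < epay p i m t

/-- The mixed strategy `m` weakly dominates `s` on `G`. -/
def MWDom {ι : Type*} [DecidableEq ι] {σ : ι → Type*} [∀ i, Fintype (σ i)]
    (p : ι → (∀ j, σ j) → ℝ) (G : ∀ i, Set (σ i)) (i : ι) (m : σ i → ℝ) (s : σ i) : Prop :=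
  (∀ t : ∀ j, σ j, OppIn G i t → p i (update t i s) ≤ epay p i m t) ∧
  (∃ t : ∀ j, σ j, OppIn G i t ∧ p i (update t i s) < epay p i m t)

/-- Local elimination of strategies strictly dominated by a pure strategy. -/
def LS {ι : Type*} [DecidableEq ι] {σ : ι → Type*} (p : ι → (∀ j, σ j) → ℝ)
    (G : ∀ i, Set (σ i)) : ∀ i, Set (σ i) :=
  fun i => {s | s ∈ G i ∧ ¬ ∃ s' ∈ G i, SDom p G i s' s}

/-- Global elimination of strategies strictly dominated by a pure strategy. -/
def GS {ι : Type*} [DecidableEq ι] {σ : ι → Type*} (p : ι → (∀ j, σ j) → ℝ)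
    (G : ∀ i, Set (σ i)) : ∀ i, Set (σ i) :=
  fun i => {s | s ∈ G i ∧ ¬ ∃ s' : σ i, SDom p G i s' s}

/-- Local elimination of strategies weakly dominated by a pure strategy. -/
def LW {ι : Type*} [DecidableEq ι] {σ : ι → Type*} (p : ι → (∀ j, σ j) → ℝ)
    (G : ∀ i, Set (σ i)) : ∀ i, Set (σ i) :=
  fun i => {s | s ∈ G i ∧ ¬ ∃ s' ∈ G i, WDom p G i s' s}

/-- Global elimination of strategies weakly dominated by a pure strategy. -/
def GW {ι : Type*} [DecidableEq ι] {σ : ι → Type*} (p : ι → (∀ j, σ j) → ℝ)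
    (G : ∀ i, Set (σ i)) : ∀ i, Set (σ i) :=
  fun i => {s | s ∈ G i ∧ ¬ ∃ s' : σ i, WDom p G i s' s}

/-- Local elimination of strategies strictly dominated by a mixed strategy. -/
def MLS {ι : Type*} [DecidableEq ι] {σ : ι → Type*} [∀ i, Fintype (σ i)] (p : ι → (∀ j, σ j) → ℝ)
    (G : ∀ i, Set (σ i)) : ∀ i, Set (σ i) :=
  fun i => {s | s ∈ G i ∧ ¬ ∃ m ∈ Mixed (G i), MSDom p G i m s}

/-- Global elimination of strategies strictly dominated by a mixed strategy. -/
def MGS {ι : Type*} [DecidableEq ι] {σ : ι → Type*} [∀ i, Fintype (σ i)] (p : ι → (∀ j, σ j) → ℝ)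
    (G : ∀ i, Set (σ i)) : ∀ i, Set (σ i) :=
  fun i => {s | s ∈ G i ∧ ¬ ∃ m ∈ Mixed (Set.univ : Set (σ i)), MSDom p G i m s}

/-- Local elimination of strategies weakly dominated by a mixed strategy. -/
def MLW {ι : Type*} [DecidableEq ι] {σ : ι → Type*} [∀ i, Fintype (σ i)] (p : ι → (∀ j, σ j) → ℝ)
    (G : ∀ i, Set (σ i)) : ∀ i, Set (σ i) :=
  fun i => {s | s ∈ G i ∧ ¬ ∃ m ∈ Mixed (G i), MWDom p G i m s}

/-- Global elimination of strategies weakly dominated by a mixed strategy. -/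
def MGW {ι : Type*} [DecidableEq ι] {σ : ι → Type*} [∀ i, Fintype (σ i)] (p : ι → (∀ j, σ j) → ℝ)
    (G : ∀ i, Set (σ i)) : ∀ i, Set (σ i) :=
  fun i => {s | s ∈ G i ∧ ¬ ∃ m ∈ Mixed (Set.univ : Set (σ i)), MWDom p G i m s}

/-!
Write `s ≤_G s'` (`PayoffLE`) when `s'` pays player `i` at least as much as `s` against every
opponents' profile in `G`. Along the iteration, every strategy of `Tᵢ` stays `≤_G`-below some
strategy of `Gᵢ`, so any global dominator can be replaced by a local one and `LW G = GW G`. The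
invariant survives a round of `LW`: above any `s ∈ Gᵢ` pick a `≤_G`-upper bound in `Gᵢ` that is
maximal for weak dominance (a strict order on a finite set); nothing in `Gᵢ` dominates it, so it
survives to `LW G`.
-/

section Dominance

variable {ι : Type*} [DecidableEq ι] {σ : ι → Type*} {p : ι → (∀ j, σ j) → ℝ}
  {G G' : ∀ i, Set (σ i)} {i : ι}

def PayoffLE (p : ι → (∀ j, σ j) → ℝ) (G : ∀ i, Set (σ i)) (i : ι) (s s' : σ i) : Prop :=
  ∀ t : ∀ j, σ j, OppIn G i t → p i (update t i s) ≤ p i (update t i s')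

theorem PayoffLE.refl (s : σ i) : PayoffLE p G i s s := fun _ _ => le_rfl

theorem PayoffLE.trans {a b c : σ i} (hab : PayoffLE p G i a b) (hbc : PayoffLE p G i b c) :
    PayoffLE p G i a c :=
  fun t ht => (hab t ht).trans (hbc t ht)

theorem PayoffLE.mono {s s' : σ i} (hG : G' ≤ G) (h : PayoffLE p G i s s') :
    PayoffLE p G' i s s' :=
  fun t ht => h t fun j hj => hG j (ht j hj)

theorem WDom.payoffLE {s s' : σ i} (h : WDom p G i s' s) : PayoffLE p G i s s' := h.1

theorem WDom.of_payoffLE {s s' s'' : σ i} (h : WDom p G i s' s) (h' : PayoffLE p G i s' s'') :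
    WDom p G i s'' s :=
  ⟨h.payoffLE.trans h', let ⟨t, ht, hlt⟩ := h.2; ⟨t, ht, hlt.trans_le (h' t ht)⟩⟩

theorem WDom.irrefl (s : σ i) : ¬ WDom p G i s s :=
  fun h => let ⟨_, _, hlt⟩ := h.2; hlt.false

theorem WDom.trans {a b c : σ i} (hab : WDom p G i a b) (hbc : WDom p G i b c) :
    WDom p G i a c :=
  hbc.of_payoffLE hab.payoffLE

theorem wellFounded_wDom [Finite (σ i)] :
    WellFounded fun s s' : σ i => WDom p G i s s' := by
  have : IsTrans (σ i) fun s s' => WDom p G i s s' := ⟨fun _ _ _ h h' => h.trans h'⟩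
  have : Std.Irrefl fun s s' : σ i => WDom p G i s s' := ⟨WDom.irrefl⟩
  exact Finite.wellFounded_of_trans_of_irrefl _

end Dominance

section Elimination

variable {ι : Type*} [DecidableEq ι] {σ : ι → Type*} {p : ι → (∀ j, σ j) → ℝ}
  {G : ∀ i, Set (σ i)} {i : ι}

theorem LW_le (p : ι → (∀ j, σ j) → ℝ) (G : ∀ i, Set (σ i)) : LW p G ≤ G :=
  fun _ _ hs => hs.1

theorem LW_eq_GW_of_forall_exists_payoffLE
    (hG : ∀ i (s' : σ i), ∃ s ∈ G i, PayoffLE p G i s' s) : LW p G = GW p G := by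
  funext i
  ext s
  refine ⟨fun ⟨hs, hloc⟩ => ⟨hs, ?_⟩, fun ⟨hs, hglob⟩ => ⟨hs, fun ⟨s', _, h⟩ => hglob ⟨s', h⟩⟩⟩
  rintro ⟨s', hs'⟩
  obtain ⟨s'', hs'', hle⟩ := hG i s'
  exact hloc ⟨s'', hs'', hs'.of_payoffLE hle⟩

theorem exists_mem_LW_payoffLE [Finite (σ i)] {s₀ : σ i} (hs₀ : s₀ ∈ G i) :
    ∃ s ∈ LW p G i, PayoffLE p G i s₀ s := by
  obtain ⟨s, ⟨hs, hs₀s⟩, hmax⟩ := wellFounded_wDom.has_min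
    {s | s ∈ G i ∧ PayoffLE p G i s₀ s} ⟨s₀, hs₀, PayoffLE.refl s₀⟩
  refine ⟨s, ⟨hs, ?_⟩, hs₀s⟩
  rintro ⟨s', hs', hdom⟩
  exact hmax s' ⟨hs', hs₀s.trans hdom.payoffLE⟩ hdom

theorem forall_exists_mem_LW_payoffLE [∀ i, Finite (σ i)]
    (hG : ∀ i (s' : σ i), ∃ s ∈ G i, PayoffLE p G i s' s) (i : ι) (s' : σ i) :
    ∃ s ∈ LW p G i, PayoffLE p (LW p G) i s' s := by
  obtain ⟨s₀, hs₀, hs's₀⟩ := hG i s'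
  obtain ⟨s, hs, hs₀s⟩ := exists_mem_LW_payoffLE (p := p) hs₀
  exact ⟨s, hs, (hs's₀.trans hs₀s).mono (LW_le p G)⟩

theorem forall_exists_mem_iterate_LW_payoffLE [∀ i, Finite (σ i)] (k : ℕ) (i : ι) (s' : σ i) :
    ∃ s ∈ (LW p)^[k] ⊤ i, PayoffLE p ((LW p)^[k] ⊤) i s' s := by
  induction k generalizing i s' with
  | zero => exact ⟨s', trivial, PayoffLE.refl s'⟩
  | succ k ih =>
    rw [iterate_succ_apply']
    exact forall_exists_mem_LW_payoffLE ih i s'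

end Elimination

theorem LW_iter_eq_GW_iter_general {ι : Type*} [DecidableEq ι] {σ : ι → Type*}
    [∀ i, Fintype (σ i)]
    (p : ι → (∀ j, σ j) → ℝ)
    (k : ℕ) :
    (LW p)^[k] ⊤ = (GW p)^[k] ⊤ := by
  induction k with
  | zero => rfl
  | succ k ih =>
    rw [iterate_succ_apply', iterate_succ_apply', ← ih]
    exact LW_eq_GW_of_forall_exists_payoffLE (forall_exists_mem_iterate_LW_payoffLE k)

/-- For every k, LW^k = GW^k (iterations starting at the full game). -/
theorem LW_iter_eq_GW_iter {ι : Type*} [DecidableEq ι] [Fintype ι] {σ : ι → Type*}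
    [∀ i, Fintype (σ i)] [∀ i, Nonempty (σ i)]
    (hn : 1 < Fintype.card ι) (p : ι → (∀ j, σ j) → ℝ)
    (k : ℕ) :
    (LW p)^[k] ⊤ = (GW p)^[k] ⊤ :=
  LW_iter_eq_GW_iter_general p k
end

section
/- For every finite strategic game H, MLW^ω ⊆ MLS^ω: the outcome of iterated elimination of strategies weakly dominated by a mixed strategy is contained in the outcome of iterated elimination of strategies strictly dominated by a mixed strategy. -/
open Function

/- A strategy weakly dominated by a mixed strategy over `G i` is also weakly dominated by one over
`MLW p G i`: among the mixed strategies over `G i` that do at least as well as a given one against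
`G`, a maximiser of the total payoff against `G` puts no weight on a dominated strategy, since
shifting that weight onto the dominating mixture would raise the total. Iterating, a mixed strategy
that strictly dominates `s` on the `k`-th MLS stage can be moved onto the `k`-th MLW stage, where it
weakly dominates `s`; so the MLW stages stay inside the MLS stages. -/

section Mixed

variable {α : Type*} [Fintype α]

theorem Mixed.mono {A B : Set α} (h : A ⊆ B) : Mixed A ⊆ Mixed B :=
  fun _ ⟨hm0, hm1, hmA⟩ => ⟨hm0, hm1, fun a ha => h (hmA a ha)⟩

theorem single_mem_Mixed [DecidableEq α] {A : Set α} {a : α} (ha : a ∈ A) :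
    Pi.single a 1 ∈ Mixed A := by
  refine ⟨fun b => ?_, by simp, fun b hb => ?_⟩
  · by_cases hb : b = a <;> simp [hb]
  · by_cases hba : b = a
    · exact hba ▸ ha
    · simp [hba] at hb

theorem Mixed.nonempty_of_mem {A : Set α} {m : α → ℝ} (hm : m ∈ Mixed A) : A.Nonempty := by
  obtain ⟨a, -, ha⟩ := Finset.exists_ne_zero_of_sum_ne_zero (hm.2.1.symm ▸ one_ne_zero)
  exact ⟨a, hm.2.2 a ha⟩

theorem isCompact_Mixed (A : Set α) : IsCompact (Mixed A) := by
  have hMixed : Mixed A = stdSimplex ℝ α ∩ ⋂ a ∈ Aᶜ, {m | m a = 0} := by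
    ext m
    simp only [Mixed, stdSimplex, Set.mem_inter_iff, Set.mem_iInter, Set.mem_ofPred_eq,
      Set.mem_compl_iff, and_assoc]
    refine and_congr_right fun _ => and_congr_right fun _ => forall_congr' fun a => ?_
    exact not_imp_comm
  rw [hMixed]
  exact (isCompact_stdSimplex ℝ α).inter_right <|
    isClosed_biInter fun a _ => isClosed_eq (continuous_apply a) continuous_const

def shiftWeight [DecidableEq α] (x : α → ℝ) (b : α) (n : α → ℝ) : α → ℝ :=
  x + x b • (n - Pi.single b 1)

theorem shiftWeight_mem_Mixed [DecidableEq α] {A : Set α} {x n : α → ℝ} (hx : x ∈ Mixed A)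
    (hn : n ∈ Mixed A) (b : α) : shiftWeight x b n ∈ Mixed A := by
  obtain ⟨hx0, hx1, hxA⟩ := hx
  obtain ⟨hn0, hn1, hnA⟩ := hn
  have hval : ∀ c, shiftWeight x b n c = x c + x b * n c - if c = b then x b else 0 := by
    intro c
    by_cases hc : c = b <;> simp [shiftWeight, hc, mul_sub]
  refine ⟨fun c => ?_, ?_, fun c hc => ?_⟩
  · rw [hval]
    by_cases hc : c = b
    · subst hc; simp [mul_nonneg (hx0 c) (hn0 c)]
    · simp [hc, add_nonneg (hx0 c) (mul_nonneg (hx0 b) (hn0 c))]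
  · simp [shiftWeight, Finset.sum_add_distrib, ← Finset.mul_sum, hx1, hn1]
  · rw [hval] at hc
    by_cases hxc : x c = 0
    · by_cases hcb : c = b
      · subst hcb; simp [hxc] at hc
      · exact hnA c fun hnc => hc (by simp [hxc, hnc, hcb])
    · exact hxA c hxc

end Mixed

section Game

open scoped Classical

variable {ι : Type*} [DecidableEq ι] {σ : ι → Type*}

theorem OppIn.mono {G H : ∀ i, Set (σ i)} (hGH : G ≤ H) {i : ι} {t : ∀ j, σ j}
    (ht : OppIn G i t) : OppIn H i t :=
  fun j hj => hGH j (ht j hj)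

variable [∀ i, Fintype (σ i)] (p : ι → (∀ j, σ j) → ℝ)

theorem MLW_le (G : ∀ i, Set (σ i)) : MLW p G ≤ G := fun _ _ hs => hs.1

theorem MSDom.anti {G H : ∀ i, Set (σ i)} (hGH : G ≤ H) {i : ι} {m : σ i → ℝ} {s : σ i}
    (h : MSDom p H i m s) : MSDom p G i m s :=
  fun t ht => h t (ht.mono hGH)

theorem MSDom.mwDom {G : ∀ i, Set (σ i)} (hG : ∀ j, (G j).Nonempty) {i : ι} {m : σ i → ℝ}
    {s : σ i} (h : MSDom p G i m s) : MWDom p G i m s := by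
  choose t ht using hG
  exact ⟨fun t' ht' => (h t' ht').le, t, fun j _ => ht j, h t fun j _ => ht j⟩

theorem continuous_epay (i : ι) (t : ∀ j, σ j) :
    Continuous fun m : σ i → ℝ => epay p i m t := by
  unfold epay
  fun_prop

theorem epay_shiftWeight (i : ι) (x n : σ i → ℝ) (b : σ i) (t : ∀ j, σ j) :
    epay p i (shiftWeight x b n) t = epay p i x t + x b * (epay p i n t - p i (update t i b)) := by
  simp only [epay, shiftWeight, Pi.add_apply, Pi.smul_apply, Pi.sub_apply, smul_eq_mul, add_mul,
    Finset.sum_add_distrib, mul_sub, sub_mul, Finset.sum_sub_distrib, mul_assoc, ← Finset.mul_sum,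
    Pi.single_apply, ite_mul, one_mul, zero_mul, Finset.sum_ite_eq', Finset.mem_univ, if_true]

variable [Fintype ι]

noncomputable def totalPay (G : ∀ i, Set (σ i)) (i : ι) (m : σ i → ℝ) : ℝ :=
  ∑ t with OppIn G i t, epay p i m t

theorem exists_mem_Mixed_MLW_ge (G : ∀ i, Set (σ i)) (i : ι) {m : σ i → ℝ}
    (hm : m ∈ Mixed (G i)) :
    ∃ m' ∈ Mixed (MLW p G i), ∀ t, OppIn G i t → epay p i m t ≤ epay p i m' t := by
  set D := Mixed (G i) ∩ ⋂ t ∈ {t | OppIn G i t}, {m' | epay p i m t ≤ epay p i m' t}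
  have hD : IsCompact D := (isCompact_Mixed _).inter_right <|
    isClosed_biInter fun t _ => isClosed_le continuous_const (continuous_epay p i t)
  have hmD : m ∈ D := ⟨hm, Set.mem_biInter fun _ _ => Set.mem_ofPred.mpr le_rfl⟩
  obtain ⟨x, ⟨hxG, hxm⟩, hmax⟩ := hD.exists_isMaxOn (f := totalPay p G i) ⟨m, hmD⟩
    (continuous_finsetSum _ fun t _ => continuous_epay p i t).continuousOn
  simp only [Set.mem_iInter] at hxm
  refine ⟨x, ⟨hxG.1, hxG.2.1, fun b hb => ⟨hxG.2.2 b hb, ?_⟩⟩, hxm⟩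
  rintro ⟨n, hnG, hn_le, t₀, ht₀, hn_lt⟩
  have hxb : 0 < x b := (hxG.1 b).lt_of_ne' hb
  have h_ge : ∀ t, OppIn G i t → epay p i x t ≤ epay p i (shiftWeight x b n) t := by
    intro t ht
    rw [epay_shiftWeight]
    nlinarith [hn_le t ht]
  have hyD : shiftWeight x b n ∈ D :=
    ⟨shiftWeight_mem_Mixed hxG hnG b,
      Set.mem_biInter fun t ht => Set.mem_ofPred.mpr ((hxm t ht).trans (h_ge t ht))⟩
  have h_total : totalPay p G i x < totalPay p G i (shiftWeight x b n) := by
    refine Finset.sum_lt_sum (fun t ht => h_ge t (Finset.mem_filter.mp ht).2)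
      ⟨t₀, Finset.mem_filter.mpr ⟨Finset.mem_univ _, ht₀⟩, ?_⟩
    rw [epay_shiftWeight]
    nlinarith
  exact (hmax hyD).not_gt h_total

theorem MLW_nonempty (G : ∀ i, Set (σ i)) (i : ι) (hG : (G i).Nonempty) :
    (MLW p G i).Nonempty := by
  obtain ⟨a, ha⟩ := hG
  obtain ⟨m, hm, -⟩ := exists_mem_Mixed_MLW_ge p G i (single_mem_Mixed ha)
  exact Mixed.nonempty_of_mem hm

theorem exists_mem_Mixed_MLW_iterate_ge (k : ℕ) (i : ι) {m : σ i → ℝ}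
    (hm : m ∈ Mixed Set.univ) :
    ∃ m' ∈ Mixed ((MLW p)^[k] ⊤ i),
      ∀ t, OppIn ((MLW p)^[k] ⊤) i t → epay p i m t ≤ epay p i m' t := by
  induction k with
  | zero => exact ⟨m, hm, fun _ _ => le_rfl⟩
  | succ k ih =>
    obtain ⟨m₁, hm₁, hm_le⟩ := ih
    obtain ⟨m₂, hm₂, hm₁_le⟩ := exists_mem_Mixed_MLW_ge p _ i hm₁
    rw [Function.iterate_succ_apply']
    refine ⟨m₂, hm₂, fun t ht => ?_⟩
    have ht' := ht.mono (MLW_le p _)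
    exact (hm_le t ht').trans (hm₁_le t ht')

variable [∀ i, Nonempty (σ i)]

theorem MLW_iterate_nonempty (k : ℕ) (i : ι) : ((MLW p)^[k] ⊤ i).Nonempty := by
  induction k generalizing i with
  | zero => exact Set.univ_nonempty
  | succ k ih =>
    rw [Function.iterate_succ_apply']
    exact MLW_nonempty p _ i (ih i)

theorem MLW_iterate_le_MLS_iterate (k : ℕ) : (MLW p)^[k] ⊤ ≤ (MLS p)^[k] ⊤ := by
  induction k with
  | zero => exact le_rfl
  | succ k ih =>
    rw [Function.iterate_succ_apply', Function.iterate_succ_apply']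
    intro i s ⟨hsW, hs_undom⟩
    refine ⟨ih i hsW, fun ⟨m, hm, hm_dom⟩ => hs_undom ?_⟩
    obtain ⟨m', hm', hm'_ge⟩ :=
      exists_mem_Mixed_MLW_iterate_ge p k i (Mixed.mono (Set.subset_univ _) hm)
    refine ⟨m', hm', MSDom.mwDom p (MLW_iterate_nonempty p k) fun t ht => ?_⟩
    exact (hm_dom.anti p ih t ht).trans_le (hm'_ge t ht)

end Game

theorem MLW_omega_subset_MLS_omega_general {ι : Type*} [DecidableEq ι] [Fintype ι] {σ : ι → Type*}
    [∀ i, Fintype (σ i)] [∀ i, Nonempty (σ i)]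
    (p : ι → (∀ j, σ j) → ℝ) :
    (⨅ k : ℕ, (MLW p)^[k] ⊤) ≤ ⨅ k : ℕ, (MLS p)^[k] ⊤ :=
  le_iInf fun k => (iInf_le _ k).trans (MLW_iterate_le_MLS_iterate p k)

/-- MLW^ω ⊆ MLS^ω. -/
theorem MLW_omega_subset_MLS_omega {ι : Type*} [DecidableEq ι] [Fintype ι] {σ : ι → Type*}
    [∀ i, Fintype (σ i)] [∀ i, Nonempty (σ i)]
    (hn : 1 < Fintype.card ι) (p : ι → (∀ j, σ j) → ℝ) :
    (⨅ k : ℕ, (MLW p)^[k] ⊤) ≤ ⨅ k : ℕ, (MLS p)^[k] ⊤ :=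
  MLW_omega_subset_MLS_omega_general p
end

section
/- None of the operators LW, MLW, GW and MGW is monotonic: for each of these four operators there exist a finite strategic game H and restrictions G ⊆ G' of H such that the image of G under the operator is not contained in the image of G'. -/
open Function

/-!
Pure domination is a special case of mixed domination, and global elimination removes at least
what local elimination does, so `MGW G ≤ Op G ≤ LW G` for each of the four operators. It
therefore suffices to find `G ≤ G'` and a strategy that survives `MGW` on `G` but not `LW` on
`G'`. In the coordination game where both players get `1` if both play `0` and `0` otherwise,
restrict player 1 to strategy `1`: player 0 is then indifferent between her strategies, so none
is dominated. Once player 1 may also play `0`, strategy `0` weakly dominates strategy `1`.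
-/

theorem mixed_mono {α : Type*} [Fintype α] {A B : Set α} (hAB : A ⊆ B) : Mixed A ⊆ Mixed B :=
  fun _ ⟨hnonneg, hsum, hsupp⟩ => ⟨hnonneg, hsum, fun a ha => hAB (hsupp a ha)⟩

theorem single_mem_mixed {α : Type*} [Fintype α] [DecidableEq α] {A : Set α} {a : α}
    (ha : a ∈ A) : Pi.single a 1 ∈ Mixed A := by
  refine ⟨fun b => ?_, Fintype.sum_pi_single' a 1,
    fun _ hb => (Pi.support_single_subset hb : _ = a) ▸ ha⟩
  rw [Pi.single_apply]
  split_ifs <;> norm_num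

section Sandwich

variable {ι : Type*} [DecidableEq ι] {σ : ι → Type*}

theorem GW_le_LW (p : ι → (∀ j, σ j) → ℝ) (G : ∀ i, Set (σ i)) : GW p G ≤ LW p G :=
  fun _ _ ⟨hs, hnd⟩ => ⟨hs, fun ⟨s', _, hd⟩ => hnd ⟨s', hd⟩⟩

variable [∀ i, Fintype (σ i)] (p : ι → (∀ j, σ j) → ℝ)

theorem epay_single {i : ι} [DecidableEq (σ i)] (s : σ i) (t : ∀ j, σ j) :
    epay p i (Pi.single s 1) t = p i (update t i s) := by
  simp [epay, Pi.single_apply]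

theorem WDom.mWDom_single {G : ∀ i, Set (σ i)} {i : ι} {s' s : σ i} [DecidableEq (σ i)]
    (hd : WDom p G i s' s) : MWDom p G i (Pi.single s' 1) s := by
  simp only [MWDom, epay_single]
  exact hd

variable (G : ∀ i, Set (σ i))

theorem MGW_le_MLW : MGW p G ≤ MLW p G :=
  fun i _ ⟨hs, hnd⟩ => ⟨hs, fun ⟨m, hm, hd⟩ => hnd ⟨m, mixed_mono (Set.subset_univ (G i)) hm, hd⟩⟩

theorem MLW_le_LW : MLW p G ≤ LW p G := by
  classical
  exact fun _ _ ⟨hs, hnd⟩ => ⟨hs, fun ⟨_, hs', hd⟩ => hnd ⟨_, single_mem_mixed hs', hd.mWDom_single⟩⟩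

theorem MGW_le_GW : MGW p G ≤ GW p G := by
  classical
  exact fun _ _ ⟨hs, hnd⟩ => ⟨hs, fun ⟨_, hd⟩ => hnd ⟨_, single_mem_mixed trivial, hd.mWDom_single⟩⟩

end Sandwich

section Indifference

variable {ι : Type*} [DecidableEq ι] {σ : ι → Type*} [∀ i, Fintype (σ i)]
  {p : ι → (∀ j, σ j) → ℝ} {G : ∀ i, Set (σ i)} {i : ι}

def Indifferent (p : ι → (∀ j, σ j) → ℝ) (G : ∀ i, Set (σ i)) (i : ι) : Prop :=
  ∀ t : ∀ j, σ j, OppIn G i t → ∀ a b : σ i, p i (update t i a) = p i (update t i b)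

theorem Indifferent.epay_eq (h : Indifferent p G i) {t : ∀ j, σ j} (ht : OppIn G i t)
    {m : σ i → ℝ} (hm : ∑ a, m a = 1) (s : σ i) : epay p i m t = p i (update t i s) := by
  calc epay p i m t = ∑ a, m a * p i (update t i s) := by simp only [epay, h t ht _ s]
    _ = p i (update t i s) := by rw [← Finset.sum_mul, hm, one_mul]

theorem Indifferent.mem_MGW (h : Indifferent p G i) {s : σ i} (hs : s ∈ G i) :
    s ∈ MGW p G i := by
  refine ⟨hs, fun ⟨m, ⟨_, hm, _⟩, _, t, ht, hlt⟩ => ?_⟩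
  rw [h.epay_eq ht hm s] at hlt
  exact lt_irrefl _ hlt

end Indifference

namespace CoordinationGame

def payoff : Fin 2 → (Fin 2 → Fin 2) → ℝ :=
  fun _ t => if t 0 = 0 ∧ t 1 = 0 then 1 else 0

def narrow : Fin 2 → Set (Fin 2) :=
  fun i => if i = 0 then Set.univ else {1}

theorem payoff_update_zero (t : Fin 2 → Fin 2) (a : Fin 2) :
    payoff 0 (update t 0 a) = if a = 0 ∧ t 1 = 0 then 1 else 0 := by
  simp [payoff]

theorem indifferent_narrow : Indifferent payoff narrow 0 := by
  intro t ht a b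
  have ht1 : t 1 = 1 := by simpa [narrow] using ht 1 (by decide)
  simp [payoff_update_zero, ht1]

theorem wDom_top : WDom payoff ⊤ 0 0 1 := by
  refine ⟨fun t _ => ?_, 0, fun _ _ => trivial, ?_⟩ <;>
    rw [payoff_update_zero, payoff_update_zero] <;> split_ifs <;> simp_all

theorem one_mem_MGW_narrow : (1 : Fin 2) ∈ MGW payoff narrow 0 :=
  indifferent_narrow.mem_MGW (by simp [narrow])

theorem one_notMem_LW_top : (1 : Fin 2) ∉ LW payoff ⊤ 0 :=
  fun ⟨_, hnd⟩ => hnd ⟨0, trivial, wDom_top⟩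

end CoordinationGame

/-- None of the operators LW, MLW, GW and MGW is monotonic: for each of them
there exist a finite strategic game (with more than one player, finite nonempty
strategy sets and real-valued payoffs) and restrictions G ⊆ G' such that the
image of G under the operator is not contained in the image of G'. -/
theorem LW_MLW_GW_MGW_not_monotone :
    (∃ (ι : Type) (dι : DecidableEq ι) (fι : Fintype ι) (σ : ι → Type)
        (fσ : ∀ i, Fintype (σ i)) (_ : ∀ i, Nonempty (σ i))
        (p : ι → (∀ j, σ j) → ℝ) (G G' : ∀ i, Set (σ i)),
        1 < @Fintype.card ι fι ∧ G ≤ G' ∧ ¬ @LW ι dι σ p G ≤ @LW ι dι σ p G') ∧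
    (∃ (ι : Type) (dι : DecidableEq ι) (fι : Fintype ι) (σ : ι → Type)
        (fσ : ∀ i, Fintype (σ i)) (_ : ∀ i, Nonempty (σ i))
        (p : ι → (∀ j, σ j) → ℝ) (G G' : ∀ i, Set (σ i)),
        1 < @Fintype.card ι fι ∧ G ≤ G' ∧
          ¬ @MLW ι dι σ fσ p G ≤ @MLW ι dι σ fσ p G') ∧
    (∃ (ι : Type) (dι : DecidableEq ι) (fι : Fintype ι) (σ : ι → Type)
        (fσ : ∀ i, Fintype (σ i)) (_ : ∀ i, Nonempty (σ i))
        (p : ι → (∀ j, σ j) → ℝ) (G G' : ∀ i, Set (σ i)),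
        1 < @Fintype.card ι fι ∧ G ≤ G' ∧ ¬ @GW ι dι σ p G ≤ @GW ι dι σ p G') ∧
    (∃ (ι : Type) (dι : DecidableEq ι) (fι : Fintype ι) (σ : ι → Type)
        (fσ : ∀ i, Fintype (σ i)) (_ : ∀ i, Nonempty (σ i))
        (p : ι → (∀ j, σ j) → ℝ) (G G' : ∀ i, Set (σ i)),
        1 < @Fintype.card ι fι ∧ G ≤ G' ∧
          ¬ @MGW ι dι σ fσ p G ≤ @MGW ι dι σ fσ p G') := by
  open CoordinationGame in
  have not_monotone (Op : (Fin 2 → Set (Fin 2)) → Fin 2 → Set (Fin 2))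
      (hlo : MGW payoff narrow ≤ Op narrow) (hhi : Op ⊤ ≤ LW payoff ⊤) : ¬ Op narrow ≤ Op ⊤ :=
    fun hle => one_notMem_LW_top (hhi 0 (hle 0 (hlo 0 one_mem_MGW_narrow)))
  refine ⟨?_, ?_, ?_, ?_⟩ <;>
    refine ⟨Fin 2, inferInstance, inferInstance, fun _ => Fin 2, inferInstance,
      fun _ => inferInstance, payoff, narrow, ⊤, by decide, le_top, not_monotone _ ?_ ?_⟩
  · exact (MGW_le_MLW _ _).trans (MLW_le_LW _ _)
  · exact le_rfl
  · exact MGW_le_MLW _ _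
  · exact MLW_le_LW _ _
  · exact MGW_le_GW _ _
  · exact GW_le_LW _ _
  · exact le_rfl
  · exact (MGW_le_GW _ _).trans (GW_le_LW _ _)
end
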